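/- arXiv:2202.12656 — 2 statements merged into one kernel-verified Lean document; each statement's English description precedes it below -/
import Mathlib

section
/- The closest incoherent measurement in measurement relative entropy is the dephased measurement: for a POVM M = {M_x} on C^d, min over incoherent POVMs F = {F_x} of (1/d) ∑_x D(M_x‖F_x) equals (1/d) ∑_x D(M_x‖Δ(M_x)) = (1/d) ∑_x [S(Δ(M_x)) − S(M_x)], where S is the von Neumann entropy extended to positive semidefinite operators by S(P) = −tr(P log P). -/
open Matrix Kronecker
open scoped BigOperators ComplexOrder Classical

namespace QMeas

/-- Dephasing map in the standard basis. -/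
def deph {ι : Type*} [Fintype ι] [DecidableEq ι] (X : Matrix ι ι ℂ) : Matrix ι ι ℂ :=
  Matrix.diagonal (fun i => X i i)

/-- Matrix logarithm via the hermitian functional calculus (junk value `0` off hermitians). -/
noncomputable def matLog {ι : Type*} [Fintype ι] [DecidableEq ι] (A : Matrix ι ι ℂ) :
    Matrix ι ι ℂ :=
  if h : A.IsHermitian then h.cfc Real.log else 0

/-- Quantum relative entropy between positive semidefinite operators, `⊤` when the
support condition `im M ⊆ im N` fails. -/
noncomputable def qRelEnt {ι : Type*} [Fintype ι] [DecidableEq ι]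
    (M N : Matrix ι ι ℂ) : EReal :=
  if LinearMap.range M.mulVecLin ≤ LinearMap.range N.mulVecLin then
    (((M * (matLog M - matLog N)).trace.re : ℝ) : EReal)
  else ⊤

/-- von Neumann entropy `S(P) = -tr(P log P)` of a positive semidefinite operator. -/
noncomputable def vnEnt {ι : Type*} [Fintype ι] [DecidableEq ι] (P : Matrix ι ι ℂ) : ℝ :=
  -(P * matLog P).trace.re

/-- Measurement relative entropy `(1/dim) ∑ₓ D(Mₓ‖Nₓ)` between two families of POVM elements. -/
noncomputable def DmF {ι : Type*} [Fintype ι] [DecidableEq ι] {κ : Type*} [Fintype κ]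
    (M N : κ → Matrix ι ι ℂ) : EReal :=
  (((Fintype.card ι : ℝ)⁻¹ : ℝ) : EReal) * ∑ x, qRelEnt (M x) (N x)

/-- A family of matrices is a POVM: positive semidefinite elements summing to the identity. -/
def IsPOVM {ι : Type*} [Fintype ι] [DecidableEq ι] {κ : Type*} [Fintype κ]
    (M : κ → Matrix ι ι ℂ) : Prop :=
  (∀ x, (M x).PosSemidef) ∧ ∑ x, M x = 1

/-- The Choi matrix of a linear map on matrices. -/
noncomputable def choi {ι : Type*} [Fintype ι] [DecidableEq ι]
    (E : Matrix ι ι ℂ →ₗ[ℂ] Matrix ι ι ℂ) : Matrix (ι × ι) (ι × ι) ℂ :=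
  Matrix.of fun p q => E (Matrix.single p.1 q.1 1) p.2 q.2

/-- A quantum channel: completely positive (PSD Choi matrix) and trace preserving. -/
def IsChannel {ι : Type*} [Fintype ι] [DecidableEq ι]
    (E : Matrix ι ι ℂ →ₗ[ℂ] Matrix ι ι ℂ) : Prop :=
  (choi E).PosSemidef ∧ ∀ A, (E A).trace = A.trace

/-- `Edag` is the Hilbert–Schmidt adjoint of `E`. -/
def IsAdjointPair {ι : Type*} [Fintype ι] [DecidableEq ι]
    (E Edag : Matrix ι ι ℂ →ₗ[ℂ] Matrix ι ι ℂ) : Prop :=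
  ∀ A B, (E A * B).trace = (A * Edag B).trace

/-- A bipartite separable (unnormalized) operator. -/
def IsSepOp {ι : Type*} [Fintype ι] [DecidableEq ι]
    (Y : Matrix (ι × ι) (ι × ι) ℂ) : Prop :=
  ∃ (k : ℕ) (P Q : Fin k → Matrix ι ι ℂ),
    (∀ i, (P i).PosSemidef) ∧ (∀ i, (Q i).PosSemidef) ∧ Y = ∑ i, P i ⊗ₖ Q i

/-- Partial trace over the second factor. -/
noncomputable def ptraceB {ι : Type*} [Fintype ι] [DecidableEq ι]
    (Y : Matrix (ι × ι) (ι × ι) ℂ) : Matrix ι ι ℂ :=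
  Matrix.of fun a a' => ∑ b, Y (a, b) (a', b)

/-- Partial trace over the first factor. -/
noncomputable def ptraceA {ι : Type*} [Fintype ι] [DecidableEq ι]
    (Y : Matrix (ι × ι) (ι × ι) ℂ) : Matrix ι ι ℂ :=
  Matrix.of fun b b' => ∑ a, Y (a, b) (a, b')

/-! ### Auxiliary lemmas -/

section Aux

variable {ι : Type*} [Fintype ι] [DecidableEq ι]

lemma isHermitian_diag_ofReal (q : ι → ℝ) :
    (Matrix.diagonal fun i => ((q i : ℝ) : ℂ)).IsHermitian :=
  Matrix.isHermitian_diagonal_of_self_adjoint _ (funext fun i => Complex.conj_ofReal _)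

lemma mem_spectrum_diag (q : ι → ℝ) (i : ι) :
    q i ∈ spectrum ℝ (Matrix.diagonal fun j => ((q j : ℝ) : ℂ)) := by
  rw [← spectrum.algebraMap_mem_iff ℂ, spectrum_diagonal]
  simp only [RCLike.algebraMap_eq_ofReal]
  exact ⟨i, rfl⟩

/-- The candidate star algebra homomorphism realizing the continuous functional calculus of a
real diagonal matrix. -/
noncomputable def diagCfcAux (q : ι → ℝ) :
    C(spectrum ℝ (Matrix.diagonal fun i => ((q i : ℝ) : ℂ)), ℝ) →⋆ₐ[ℝ] Matrix ι ι ℂ where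
  toFun g := Matrix.diagonal fun i => ((g ⟨q i, mem_spectrum_diag q i⟩ : ℝ) : ℂ)
  map_one' := by simp [Pi.one_def (M := fun _ : ι ↦ ℂ)]
  map_mul' f g := by
    simp only [ContinuousMap.mul_apply, Matrix.diagonal_mul_diagonal]
    congr 1
    funext i
    push_cast
    ring
  map_zero' := by simp [Pi.zero_def (M := fun _ : ι ↦ ℂ)]
  map_add' f g := by
    simp only [ContinuousMap.add_apply, Matrix.diagonal_add]
    congr 1
    funext i
    push_cast
    ring
  commutes' r := by
    rw [Matrix.algebraMap_eq_diagonal]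
    exact congrArg Matrix.diagonal (funext fun i => by simp)
  map_star' f := by
    rw [Matrix.star_eq_conjTranspose, Matrix.diagonal_conjTranspose]
    exact congrArg Matrix.diagonal (funext fun i => by simp [Complex.conj_ofReal])

lemma cfc_diag (q : ι → ℝ) (f : ℝ → ℝ) :
    cfc f (Matrix.diagonal fun i => ((q i : ℝ) : ℂ)) =
      Matrix.diagonal fun i => ((f (q i) : ℝ) : ℂ) := by
  have hsa : IsSelfAdjoint (Matrix.diagonal fun i => ((q i : ℝ) : ℂ)) :=
    isHermitian_diag_ofReal q
  have h0 : FiniteDimensional ℝ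
      C(spectrum ℝ (Matrix.diagonal fun i => ((q i : ℝ) : ℂ)), ℝ) :=
    FiniteDimensional.of_injective (ContinuousMap.coeFnLinearMap ℝ (M := ℝ))
      DFunLike.coe_injective
  have hcont : Continuous (diagCfcAux q) :=
    LinearMap.continuous_of_finiteDimensional (diagCfcAux q).toAlgHom.toLinearMap
  have hid : diagCfcAux q
      (ContinuousMap.restrict (spectrum ℝ (Matrix.diagonal fun i => ((q i : ℝ) : ℂ)))
        (ContinuousMap.id ℝ)) = Matrix.diagonal fun i => ((q i : ℝ) : ℂ) := rfl
  have h := cfcHom_eq_of_continuous_of_map_id hsa (diagCfcAux q) hcont hid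
  rw [cfc_apply f _ hsa (by rw [continuousOn_iff_continuous_restrict]; fun_prop), h]
  rfl

lemma matLog_diag (q : ι → ℝ) :
    matLog (Matrix.diagonal fun i => ((q i : ℝ) : ℂ)) =
      Matrix.diagonal fun i => ((Real.log (q i) : ℝ) : ℂ) := by
  rw [matLog, dif_pos (isHermitian_diag_ofReal q),
    ← Matrix.IsHermitian.cfc_eq (isHermitian_diag_ofReal q), cfc_diag]

lemma psd_diag_nonneg {M : Matrix ι ι ℂ} (hM : M.PosSemidef) (i : ι) :
    0 ≤ (M i i).re := by
  have h := hM.dotProduct_mulVec_nonneg (Pi.single i 1)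
  have hs : star (Pi.single i (1:ℂ) : ι → ℂ) = (Pi.single i (1:ℂ) : ι → ℂ) := by
    funext j
    by_cases hj : j = i <;> simp [Pi.single_apply, hj]
  rw [hs, Matrix.mulVec_single] at h
  have h' : (0 : ℂ) ≤ M i i := by
    simpa [single_dotProduct] using h
  exact (Complex.nonneg_iff.mp h').1

lemma psd_diag_eq_re {M : Matrix ι ι ℂ} (hM : M.PosSemidef) (i : ι) :
    M i i = (((M i i).re : ℝ) : ℂ) := by
  have h := hM.dotProduct_mulVec_nonneg (Pi.single i 1)
  have hs : star (Pi.single i (1:ℂ) : ι → ℂ) = (Pi.single i (1:ℂ) : ι → ℂ) := by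
    funext j
    by_cases hj : j = i <;> simp [Pi.single_apply, hj]
  rw [hs, Matrix.mulVec_single] at h
  have h' : (0 : ℂ) ≤ M i i := by
    simpa [single_dotProduct] using h
  have him := (Complex.nonneg_iff.mp h').2
  exact Complex.ext rfl (by simp [← him])

lemma psd_row_eq_zero {M : Matrix ι ι ℂ} (hM : M.PosSemidef) {i : ι}
    (h : M i i = 0) (j : ι) : M i j = 0 := by
  obtain ⟨A, rfl⟩ : ∃ A : Matrix ι ι ℂ, M = Aᴴ * A := by
    open scoped MatrixOrder in exact CStarAlgebra.nonneg_iff_eq_star_mul_self.mp hM.nonneg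
  have h0 : ∑ k, ((starRingEnd ℂ) (A k i) * A k i).re = 0 := by
    have := congrArg Complex.re h
    simpa [Matrix.mul_apply, Matrix.conjTranspose_apply, Complex.re_sum] using this
  have hterm : ∀ k, ((starRingEnd ℂ) (A k i) * A k i).re = Complex.normSq (A k i) := fun k => by
    simp [Complex.mul_re, Complex.normSq_apply]
  have hA : ∀ k, A k i = 0 := by
    intro k
    have hz := (Finset.sum_eq_zero_iff_of_nonneg (fun k _ => by
        rw [hterm k]; exact Complex.normSq_nonneg _)).mp h0 k (Finset.mem_univ k)
    rw [hterm k] at hz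
    exact Complex.normSq_eq_zero.mp hz
  simp [Matrix.mul_apply, Matrix.conjTranspose_apply, hA]

lemma range_le_deph {M : Matrix ι ι ℂ} (hM : M.PosSemidef) :
    LinearMap.range M.mulVecLin ≤
      LinearMap.range (Matrix.diagonal fun i => M i i).mulVecLin := by
  rintro w ⟨v, rfl⟩
  refine ⟨fun i => if M i i = 0 then 0 else M.mulVecLin v i / M i i, ?_⟩
  funext i
  simp only [Matrix.mulVecLin_apply, Matrix.mulVec_diagonal]
  by_cases h : M i i = 0
  · rw [if_pos h, mul_zero]
    symm
    rw [Matrix.mulVec, dotProduct]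
    exact Finset.sum_eq_zero fun j _ => by rw [psd_row_eq_zero hM h j, zero_mul]
  · rw [if_neg h, mul_comm, div_mul_cancel₀ _ h]


lemma diag_zero_of_range_le {M : Matrix ι ι ℂ} {c : ι → ℂ}
    (h : LinearMap.range M.mulVecLin ≤ LinearMap.range (Matrix.diagonal c).mulVecLin)
    {i : ι} (hc : c i = 0) : M i i = 0 := by
  obtain ⟨u, hu⟩ := h ⟨Pi.single i 1, rfl⟩
  have h2 := congrFun hu i
  simp only [Matrix.mulVecLin_apply, Matrix.mulVec_diagonal, Matrix.mulVec_single, hc,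
    zero_mul, mul_one, MulOpposite.op_one, one_smul, Matrix.col_apply] at h2
  exact h2.symm

lemma trace_mul_diagonal (M : Matrix ι ι ℂ) (c : ι → ℂ) :
    (M * Matrix.diagonal c).trace = ∑ i, M i i * c i := by
  simp [Matrix.trace, Matrix.diag, Matrix.mul_diagonal]

lemma qRelEnt_psd_diag {M : Matrix ι ι ℂ} (q : ι → ℝ)
    (hsupp : LinearMap.range M.mulVecLin ≤
      LinearMap.range (Matrix.diagonal fun i => ((q i : ℝ) : ℂ)).mulVecLin) :
    qRelEnt M (Matrix.diagonal fun i => ((q i : ℝ) : ℂ)) =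
      (((M * matLog M).trace.re - ∑ i, (M i i).re * Real.log (q i) : ℝ) : EReal) := by
  rw [qRelEnt, if_pos hsupp, matLog_diag]
  congr 1
  rw [Matrix.mul_sub, Matrix.trace_sub, Complex.sub_re]
  congr 1
  rw [trace_mul_diagonal, Complex.re_sum]
  exact Finset.sum_congr rfl fun i _ => by
    simp [Complex.mul_re]

lemma vnEnt_diag (q : ι → ℝ) :
    vnEnt (Matrix.diagonal fun i => ((q i : ℝ) : ℂ)) = -∑ i, q i * Real.log (q i) := by
  rw [vnEnt, matLog_diag, Matrix.diagonal_mul_diagonal, Matrix.trace_diagonal]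
  rw [Complex.re_sum]
  congr 1
  exact Finset.sum_congr rfl fun i _ => by
    rw [← Complex.ofReal_mul, Complex.ofReal_re]

lemma gibbs_pt {p q : ℝ} (hp : 0 ≤ p) (hq : 0 ≤ q) (h : q = 0 → p = 0) :
    p - q ≤ p * Real.log p - p * Real.log q := by
  rcases eq_or_lt_of_le hp with h0 | hp'
  · rw [← h0]
    simp only [zero_mul, sub_zero, zero_sub, sub_self]
    linarith
  rcases eq_or_lt_of_le hq with h1 | hq'
  · exact absurd (h h1.symm) (ne_of_gt hp')
  have hlog := Real.log_le_sub_one_of_pos (show (0:ℝ) < q / p from div_pos hq' hp')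
  rw [Real.log_div (ne_of_gt hq') (ne_of_gt hp')] at hlog
  have h2 : p * (Real.log q - Real.log p) ≤ p * (q / p - 1) :=
    mul_le_mul_of_nonneg_left hlog hp
  rw [mul_sub, mul_sub, mul_div_cancel₀ _ (ne_of_gt hp'), mul_one] at h2
  linarith

lemma qRelEnt_ne_bot (M N : Matrix ι ι ℂ) : qRelEnt M N ≠ ⊥ := by
  rw [qRelEnt]
  split
  · exact EReal.coe_ne_bot _
  · exact top_ne_bot

lemma ereal_sum_ne_bot {κ : Type*} (s : Finset κ) (f : κ → EReal)
    (h : ∀ i ∈ s, f i ≠ ⊥) : ∑ i ∈ s, f i ≠ ⊥ := by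
  classical
  induction s using Finset.induction_on with
  | empty => simp
  | insert _ _ hx ih =>
    rename_i a s
    rw [Finset.sum_insert hx]
    intro hc
    rcases EReal.add_eq_bot_iff.mp hc with h1 | h1
    · exact h a (Finset.mem_insert_self a s) h1
    · exact ih (fun i hi => h i (Finset.mem_insert_of_mem hi)) h1

lemma ereal_sum_eq_top {κ : Type*} (s : Finset κ) (f : κ → EReal)
    (hb : ∀ i ∈ s, f i ≠ ⊥) {i₀ : κ} (hi : i₀ ∈ s) (ht : f i₀ = ⊤) :
    ∑ i ∈ s, f i = ⊤ := by
  classical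
  rw [← Finset.add_sum_erase s f hi, ht]
  rw [EReal.top_add_iff_ne_bot]
  exact ereal_sum_ne_bot _ _ fun j hj => hb j (Finset.mem_of_mem_erase hj)

lemma ereal_coe_sum {κ : Type*} (s : Finset κ) (g : κ → ℝ) :
    ((∑ i ∈ s, g i : ℝ) : EReal) = ∑ i ∈ s, ((g i : ℝ) : EReal) :=
  map_sum (⟨⟨((↑) : ℝ → EReal), EReal.coe_zero⟩, EReal.coe_add⟩ : ℝ →+ EReal) g s

end Aux

/-- the closest incoherent measurement in measurement relative entropy is the
dephased measurement, and the minimum equals `(1/d) ∑ₓ [S(Δ Mₓ) − S(Mₓ)]`. -/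
theorem min_DmF_incoherent_eq_dephased {d n : ℕ} (hd : 0 < d)
    (M : Fin n → Matrix (Fin d) (Fin d) ℂ) (hM : IsPOVM M) :
    sInf {r : EReal | ∃ F : Fin n → Matrix (Fin d) (Fin d) ℂ,
        IsPOVM F ∧ (∀ x, deph (F x) = F x) ∧ r = DmF M F} =
      DmF M (fun x => deph (M x)) ∧
    DmF M (fun x => deph (M x)) =
      (((d : ℝ)⁻¹ * ∑ x, (vnEnt (deph (M x)) - vnEnt (M x)) : ℝ) : EReal) := by
  classical
  obtain ⟨hMpsd, hMsum⟩ := hM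
  -- diagonal values of the POVM elements
  set p : Fin n → Fin d → ℝ := fun x i => (M x i i).re with hp
  have hpnn : ∀ x i, 0 ≤ p x i := fun x i => psd_diag_nonneg (hMpsd x) i
  have hMdiag : ∀ x, deph (M x) = Matrix.diagonal fun i => ((p x i : ℝ) : ℂ) := by
    intro x
    unfold deph
    exact congrArg Matrix.diagonal (funext fun i => psd_diag_eq_re (hMpsd x) i)
  have hpsum : ∀ i, ∑ x, p x i = 1 := by
    intro i
    have h := congrArg (fun A : Matrix (Fin d) (Fin d) ℂ => (A i i).re) hMsum
    simpa [Matrix.sum_apply, Complex.re_sum, Matrix.one_apply, hp] using h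
  -- the value of each relative entropy term against the dephased element
  set t : Fin n → ℝ := fun x => (M x * matLog (M x)).trace.re with ht
  have hΔsupp : ∀ x, LinearMap.range (M x).mulVecLin ≤
      LinearMap.range (Matrix.diagonal fun i => ((p x i : ℝ) : ℂ)).mulVecLin := by
    intro x
    have h := range_le_deph (hMpsd x)
    have e : (Matrix.diagonal fun i => M x i i) =
        Matrix.diagonal fun i => ((p x i : ℝ) : ℂ) :=
      congrArg Matrix.diagonal (funext fun i => psd_diag_eq_re (hMpsd x) i)
    rwa [e] at h
  have hQ : ∀ x, qRelEnt (M x) (deph (M x)) =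
      ((t x - ∑ i, p x i * Real.log (p x i) : ℝ) : EReal) := by
    intro x
    rw [hMdiag x, qRelEnt_psd_diag (p x) (hΔsupp x)]
  have hDm : DmF M (fun x => deph (M x)) =
      (((d : ℝ)⁻¹ * ∑ x, (t x - ∑ i, p x i * Real.log (p x i)) : ℝ) : EReal) := by
    rw [DmF, Finset.sum_congr rfl fun x _ => hQ x, ← ereal_coe_sum, ← EReal.coe_mul,
      Fintype.card_fin]
  have hd' : (0:ℝ) < (d : ℝ)⁻¹ := by positivity
  -- second conjunct
  have hsecond : DmF M (fun x => deph (M x)) =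
      (((d : ℝ)⁻¹ * ∑ x, (vnEnt (deph (M x)) - vnEnt (M x)) : ℝ) : EReal) := by
    rw [hDm]
    norm_cast
    congr 1
    refine Finset.sum_congr rfl fun x _ => ?_
    rw [hMdiag x, vnEnt_diag, vnEnt]
    ring
  refine ⟨?_, hsecond⟩
  -- the dephased POVM is a feasible point
  have hΔpovm : IsPOVM (fun x => deph (M x)) := by
    constructor
    · intro x
      show (deph (M x)).PosSemidef
      rw [hMdiag x]
      exact Matrix.PosSemidef.diagonal fun i => Complex.zero_le_real.mpr (hpnn x i)
    · show ∑ x, deph (M x) = 1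
      have hsum : ∑ x, deph (M x) = deph (∑ x, M x) := by
        unfold deph
        ext i j
        by_cases h : i = j
        · subst h
          simp [Matrix.sum_apply]
        · simp [Matrix.sum_apply, Matrix.diagonal_apply_ne _ h]
      rw [hsum, hMsum]
      unfold deph
      ext i j
      by_cases h : i = j
      · subst h; simp
      · simp [Matrix.diagonal_apply_ne _ h, Matrix.one_apply_ne h]
  refine le_antisymm (sInf_le ⟨fun x => deph (M x), hΔpovm, ?_, rfl⟩) ?_
  · intro x
    show deph (deph (M x)) = deph (M x)
    unfold deph
    exact congrArg Matrix.diagonal (funext fun i => by simp)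
  -- lower bound: any incoherent POVM does at least as badly
  refine le_sInf ?_
  rintro r ⟨F, ⟨hFpsd, hFsum⟩, hFinc, rfl⟩
  set q : Fin n → Fin d → ℝ := fun x i => (F x i i).re with hq
  have hqnn : ∀ x i, 0 ≤ q x i := fun x i => psd_diag_nonneg (hFpsd x) i
  have hFdiag : ∀ x, F x = Matrix.diagonal fun i => ((q x i : ℝ) : ℂ) := by
    intro x
    rw [← hFinc x]
    unfold deph
    exact congrArg Matrix.diagonal (funext fun i => psd_diag_eq_re (hFpsd x) i)
  have hqsum : ∀ i, ∑ x, q x i = 1 := by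
    intro i
    have h := congrArg (fun A : Matrix (Fin d) (Fin d) ℂ => (A i i).re) hFsum
    simpa [Matrix.sum_apply, Complex.re_sum, Matrix.one_apply, hq] using h
  by_cases hcase : ∀ x, LinearMap.range (M x).mulVecLin ≤
      LinearMap.range (F x).mulVecLin
  · -- all supports are compatible: the finite case
    have hQF : ∀ x, qRelEnt (M x) (F x) =
        ((t x - ∑ i, p x i * Real.log (q x i) : ℝ) : EReal) := by
      intro x
      rw [hFdiag x, qRelEnt_psd_diag (q x) (by rw [← hFdiag x]; exact hcase x)]
    have hDmF : DmF M F =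
        (((d : ℝ)⁻¹ * ∑ x, (t x - ∑ i, p x i * Real.log (q x i)) : ℝ) : EReal) := by
      rw [DmF, Finset.sum_congr rfl fun x _ => hQF x, ← ereal_coe_sum, ← EReal.coe_mul,
        Fintype.card_fin]
    rw [hDm, hDmF, EReal.coe_le_coe_iff]
    refine mul_le_mul_of_nonneg_left ?_ hd'.le
    rw [Finset.sum_sub_distrib, Finset.sum_sub_distrib]
    refine sub_le_sub_left ?_ _
    rw [Finset.sum_comm, Finset.sum_comm (f := fun x i => p x i * Real.log (p x i))]
    refine Finset.sum_le_sum fun i _ => ?_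
    have hzero : ∀ x, q x i = 0 → p x i = 0 := by
      intro x hxi
      have hsupp := hcase x
      rw [hFdiag x] at hsupp
      have : M x i i = 0 :=
        diag_zero_of_range_le hsupp (by rw [hxi]; exact Complex.ofReal_zero)
      simp [hp, this]
    have key : ∑ x, (p x i - q x i) ≤
        ∑ x, (p x i * Real.log (p x i) - p x i * Real.log (q x i)) :=
      Finset.sum_le_sum fun x _ => gibbs_pt (hpnn x i) (hqnn x i) (hzero x)
    have hzero' : ∑ x, (p x i - q x i) = 0 := by
      rw [Finset.sum_sub_distrib, hpsum i, hqsum i, sub_self]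
    rw [hzero'] at key
    linarith [Finset.sum_sub_distrib (f := fun x => p x i * Real.log (p x i))
      (g := fun x => p x i * Real.log (q x i)) (s := (Finset.univ : Finset (Fin n))) ▸ key]
  · -- some support is incompatible: the relative entropy is infinite
    push_neg at hcase
    obtain ⟨x₀, hx₀⟩ := hcase
    have htop : qRelEnt (M x₀) (F x₀) = ⊤ := by
      rw [qRelEnt, if_neg hx₀]
    have hsumtop : ∑ x, qRelEnt (M x) (F x) = ⊤ :=
      ereal_sum_eq_top _ _ (fun i _ => qRelEnt_ne_bot _ _) (Finset.mem_univ x₀) htop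
    have : DmF M F = ⊤ := by
      rw [DmF, hsumtop, Fintype.card_fin]
      exact EReal.coe_mul_top_of_pos hd'
    rw [this]
    exact le_top

end QMeas
end

section
/- If Y_{AB} is a separable positive semidefinite operator on C^d ⊗ C^d, then Y_A ⊗ I_B − Y_{AB} ≥ 0, where Y_A = tr_B(Y_{AB}); consequently log(Y_A ⊗ I_B) ≥ log(Y_{AB}) on the support of Y_{AB}. -/
open Matrix Kronecker
open scoped BigOperators ComplexOrder Classical

namespace QMeas

section Helpers
variable {n : Type*} [Fintype n] [DecidableEq n]

section cfcBasics
variable {A : Matrix n n ℂ} (hA : A.IsHermitian)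

lemma cfc_mul_cfc (f g : ℝ → ℝ) :
    hA.cfc f * hA.cfc g = hA.cfc (fun x => f x * g x) := by
  unfold Matrix.IsHermitian.cfc
  simp only [Unitary.conjStarAlgAut_apply]
  have h : ∀ a b c d e f : Matrix n n ℂ, (a * b * c) * (d * e * f) = a * (b * (c * d) * e) * f :=
    fun a b c d e f => by simp only [mul_assoc]
  rw [h]
  rw [Unitary.star_mul_self_of_mem (SetLike.coe_mem _), mul_one, diagonal_mul_diagonal]
  congr! with i
  simp

lemma cfc_congr_eig {f g : ℝ → ℝ} (h : ∀ i, f (hA.eigenvalues i) = g (hA.eigenvalues i)) :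
    hA.cfc f = hA.cfc g := by
  unfold Matrix.IsHermitian.cfc
  have h2 : (RCLike.ofReal (K := ℂ)) ∘ f ∘ hA.eigenvalues
      = (RCLike.ofReal (K := ℂ)) ∘ g ∘ hA.eigenvalues := funext fun i => by simp [h i]
  rw [h2]

lemma cfc_const (c : ℝ) : hA.cfc (fun _ => c) = (c : ℂ) • 1 := by
  unfold Matrix.IsHermitian.cfc
  simp only [Unitary.conjStarAlgAut_apply]
  have h2 : diagonal ((RCLike.ofReal (K := ℂ)) ∘ (fun _ => c) ∘ hA.eigenvalues) = (c:ℂ) • 1 := by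
    ext i j
    by_cases h : i = j <;> simp [h, diagonal]
  rw [h2]
  simp only [Matrix.mul_smul, Matrix.smul_mul, mul_one]
  rw [Unitary.mul_star_self_of_mem (SetLike.coe_mem _)]

lemma cfc_one : hA.cfc (fun _ => 1) = 1 := by
  simpa using cfc_const hA 1

lemma cfc_add (f g : ℝ → ℝ) :
    hA.cfc f + hA.cfc g = hA.cfc (fun x => f x + g x) := by
  unfold Matrix.IsHermitian.cfc
  simp only [Unitary.conjStarAlgAut_apply]
  rw [← add_mul, ← mul_add, diagonal_add]
  congr! with i
  simp

lemma cfc_sub (f g : ℝ → ℝ) :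
    hA.cfc f - hA.cfc g = hA.cfc (fun x => f x - g x) := by
  have := cfc_add hA (fun x => f x - g x) g
  simp only [sub_add_cancel] at this
  rw [← this]; abel

lemma cfc_id' : hA.cfc (fun x => x) = A := by
  unfold Matrix.IsHermitian.cfc
  exact (hA.spectral_theorem).symm

lemma cfc_hermitian (f : ℝ → ℝ) : (hA.cfc f).IsHermitian := by
  unfold Matrix.IsHermitian.cfc
  have h1 : (diagonal ((RCLike.ofReal (K := ℂ)) ∘ f ∘ hA.eigenvalues)).IsHermitian := by
    rw [Matrix.IsHermitian, diagonal_conjTranspose]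
    have : star ((RCLike.ofReal (K := ℂ)) ∘ f ∘ hA.eigenvalues)
        = (RCLike.ofReal (K := ℂ)) ∘ f ∘ hA.eigenvalues := by
      funext i; simp [Pi.star_def, Function.comp]
    rw [this]
  simpa [Matrix.star_eq_conjTranspose] using
    isHermitian_mul_mul_conjTranspose (hA.eigenvectorUnitary : Matrix n n ℂ) h1

end cfcBasics

section quadSec
variable {A : Matrix n n ℂ} (hA : A.IsHermitian)
lemma quad (f : ℝ → ℝ) (v : n → ℂ) :
    star v ⬝ᵥ (hA.cfc f) *ᵥ v
      = ∑ i, (f (hA.eigenvalues i) : ℂ)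
          * ((Complex.normSq ((star (hA.eigenvectorUnitary : Matrix n n ℂ) *ᵥ v) i) : ℝ) : ℂ) := by
  set U : Matrix n n ℂ := (hA.eigenvectorUnitary : Matrix n n ℂ) with hU
  set c : n → ℂ := star U *ᵥ v with hc
  unfold Matrix.IsHermitian.cfc
  simp only [Unitary.conjStarAlgAut_apply]
  rw [mul_assoc, ← mulVec_mulVec, ← mulVec_mulVec]
  rw [dotProduct_mulVec (star v)]
  have hsv : star v ᵥ* U = star c := by
    rw [hc, star_mulVec, Matrix.star_eq_conjTranspose, conjTranspose_conjTranspose]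
  rw [hsv]
  simp only [dotProduct, mulVec_diagonal, Pi.star_apply, Function.comp_apply]
  congr 1
  funext i
  have hcc : (star (hA.eigenvectorUnitary (A := A) : Matrix n n ℂ) *ᵥ v) i = c i := rfl
  rw [Complex.normSq_eq_conj_mul_self, hcc]
  simp only [RCLike.star_def]
  exact mul_left_comm ((starRingEnd ℂ) (c i)) ((f (hA.eigenvalues i) : ℂ)) (c i)

lemma quad_re (f : ℝ → ℝ) (v : n → ℂ) :
    (star v ⬝ᵥ (hA.cfc f) *ᵥ v).re
      = ∑ i, f (hA.eigenvalues i)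
          * Complex.normSq ((star (hA.eigenvectorUnitary : Matrix n n ℂ) *ᵥ v) i) := by
  rw [quad hA f v]
  rw [show (∑ i, (f (hA.eigenvalues i) : ℂ)
      * ((Complex.normSq ((star (hA.eigenvectorUnitary : Matrix n n ℂ) *ᵥ v) i) : ℝ) : ℂ))
    = ((∑ i, f (hA.eigenvalues i)
      * Complex.normSq ((star (hA.eigenvectorUnitary : Matrix n n ℂ) *ᵥ v) i) : ℝ) : ℂ) by
    push_cast; rfl]
  exact Complex.ofReal_re _

lemma cfc_posSemidef {f : ℝ → ℝ} (hf : ∀ i, 0 ≤ f (hA.eigenvalues i)) :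
    (hA.cfc f).PosSemidef := by
  refine Matrix.PosSemidef.of_dotProduct_mulVec_nonneg ?_ (fun v => ?_)
  · unfold Matrix.IsHermitian.cfc
    have h1 : (diagonal ((RCLike.ofReal (K := ℂ)) ∘ f ∘ hA.eigenvalues)).IsHermitian := by
      rw [Matrix.IsHermitian, diagonal_conjTranspose]
      have : star ((RCLike.ofReal (K := ℂ)) ∘ f ∘ hA.eigenvalues)
          = (RCLike.ofReal (K := ℂ)) ∘ f ∘ hA.eigenvalues := by
        funext i; simp [Pi.star_def, Function.comp]
      rw [this]
    simpa [Matrix.star_eq_conjTranspose] using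
      isHermitian_mul_mul_conjTranspose (hA.eigenvectorUnitary : Matrix n n ℂ) h1
  · rw [quad hA f v, show (∑ i, (f (hA.eigenvalues i) : ℂ)
        * ((Complex.normSq ((star (hA.eigenvectorUnitary : Matrix n n ℂ) *ᵥ v) i) : ℝ) : ℂ))
      = ((∑ i, f (hA.eigenvalues i)
        * Complex.normSq ((star (hA.eigenvectorUnitary : Matrix n n ℂ) *ᵥ v) i) : ℝ) : ℂ) by
      push_cast; rfl]
    rw [Complex.zero_le_real]
    exact Finset.sum_nonneg fun i _ => mul_nonneg (hf i) (Complex.normSq_nonneg _)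

lemma sum_normSq_eq (v : n → ℂ) :
    ∑ i, Complex.normSq ((star (hA.eigenvectorUnitary : Matrix n n ℂ) *ᵥ v) i)
      = ∑ i, Complex.normSq (v i) := by
  set U : Matrix n n ℂ := (hA.eigenvectorUnitary : Matrix n n ℂ) with hU
  set c : n → ℂ := star U *ᵥ v with hc
  have key : star c ⬝ᵥ c = star v ⬝ᵥ v := by
    have hsv : star c = star v ᵥ* U := by
      rw [hc, star_mulVec, Matrix.star_eq_conjTranspose, conjTranspose_conjTranspose]
    rw [hsv, hc, ← dotProduct_mulVec, mulVec_mulVec,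
      Unitary.mul_star_self_of_mem (SetLike.coe_mem _), one_mulVec]
  have h1 : ∀ w : n → ℂ, star w ⬝ᵥ w = ((∑ i, Complex.normSq (w i) : ℝ) : ℂ) := by
    intro w
    simp only [dotProduct, Pi.star_apply, RCLike.star_def]
    push_cast
    congr 1
    funext i
    rw [Complex.normSq_eq_conj_mul_self]
  have := key
  rw [h1 c, h1 v] at this
  exact_mod_cast this

end quadSec

/-- coefficient vanishing on the kernel, for vectors in the range -/
lemma coeff_vanish_range {A : Matrix n n ℂ} (hA : A.IsHermitian) (w : n → ℂ) (i : n)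
    (h0 : hA.eigenvalues i = 0) :
    (star (hA.eigenvectorUnitary : Matrix n n ℂ) *ᵥ (A *ᵥ w)) i = 0 := by
  set U : Matrix n n ℂ := (hA.eigenvectorUnitary : Matrix n n ℂ) with hU
  have h1 : star U * A = diagonal (RCLike.ofReal ∘ hA.eigenvalues) * star U := by
    have h2 : star U * A * U = diagonal (RCLike.ofReal ∘ hA.eigenvalues) := by
      rw [hU]; simpa [Unitary.conjStarAlgAut_star_apply] using hA.conjStarAlgAut_star_eigenvectorUnitary
    calc star U * A = star U * A * (U * star U) := by
          rw [Unitary.mul_star_self_of_mem (SetLike.coe_mem _), mul_one]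
      _ = (star U * A * U) * star U := by simp only [mul_assoc]
      _ = diagonal (RCLike.ofReal ∘ hA.eigenvalues) * star U := by rw [h2]
  rw [mulVec_mulVec, h1, ← mulVec_mulVec]
  simp [mulVec_diagonal, h0]

lemma coeff_vanish_dominated {A B : Matrix n n ℂ} (hA : A.PosSemidef) (hB : B.IsHermitian)
    (hAB : (B - A).PosSemidef) (w : n → ℂ) (j : n) (h0 : hB.eigenvalues j = 0) :
    (star (hB.eigenvectorUnitary : Matrix n n ℂ) *ᵥ (A *ᵥ w)) j = 0 := by
  set u : n → ℂ := ⇑(hB.eigenvectorBasis j) with hu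
  have hBu : B *ᵥ u = 0 := by
    rw [hu, hB.mulVec_eigenvectorBasis, h0]; simp
  have hqB : star u ⬝ᵥ B *ᵥ u = 0 := by rw [hBu, dotProduct_zero]
  have hqA : star u ⬝ᵥ A *ᵥ u = 0 := by
    have h1 : (0 : ℂ) ≤ star u ⬝ᵥ A *ᵥ u := hA.dotProduct_mulVec_nonneg u
    have h2 : (0 : ℂ) ≤ star u ⬝ᵥ (B - A) *ᵥ u := hAB.dotProduct_mulVec_nonneg u
    have h3 : star u ⬝ᵥ (B - A) *ᵥ u = - (star u ⬝ᵥ A *ᵥ u) := by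
      rw [sub_mulVec, dotProduct_sub, hqB, zero_sub]
    rw [h3] at h2
    have := neg_nonneg.mp h2
    exact le_antisymm this h1
  have hAu : A *ᵥ u = 0 := (hA.dotProduct_mulVec_zero_iff u).mp hqA
  -- now the coefficient is star u ⬝ᵥ (A *ᵥ w)
  have hcoeff : (star (hB.eigenvectorUnitary : Matrix n n ℂ) *ᵥ (A *ᵥ w)) j
      = star u ⬝ᵥ (A *ᵥ w) := by
    simp only [mulVec, dotProduct, Matrix.star_apply, Pi.star_apply,
      Matrix.star_eq_conjTranspose, conjTranspose_apply, hu,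
      Matrix.IsHermitian.eigenvectorUnitary_apply]
  rw [hcoeff, dotProduct_mulVec, ← star_star (star u ᵥ* A)]
  have : star (star u ᵥ* A) = A *ᵥ u := by
    rw [star_vecMul, star_star, hA.1.eq]
  rw [this, hAu]
  simp


/-- eigenvalue lower bound from `M - 1` PSD -/
lemma one_le_eigenvalues_of_psd {M : Matrix n n ℂ} (hM : M.IsHermitian)
    (h : (M - 1).PosSemidef) (j : n) : 1 ≤ hM.eigenvalues j := by
  set u : n → ℂ := ⇑(hM.eigenvectorBasis j) with hu
  have huu : star u ⬝ᵥ u = 1 := by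
    have h1 := hM.eigenvectorBasis.orthonormal
    rw [orthonormal_iff_ite] at h1
    have h2 := h1 j j
    simp only [if_pos rfl] at h2
    rw [EuclideanSpace.inner_eq_star_dotProduct] at h2
    rw [dotProduct_comm] at h2; exact h2.trans (if_pos trivial)
  have hMu : M *ᵥ u = hM.eigenvalues j • u := by rw [hu]; exact hM.mulVec_eigenvectorBasis j
  have hq : (star u ⬝ᵥ (M - 1) *ᵥ u).re = hM.eigenvalues j - 1 := by
    rw [sub_mulVec, dotProduct_sub, one_mulVec, hMu, dotProduct_smul, huu]
    simp
  have h3 := h.re_dotProduct_nonneg u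
  rw [show RCLike.re (star u ⬝ᵥ (M - 1) *ᵥ u) = (star u ⬝ᵥ (M - 1) *ᵥ u).re from rfl, hq] at h3
  linarith

/-- the key operator anti-monotonicity of the shifted inverse -/
lemma inv_shift_psd {A B : Matrix n n ℂ} (hA : A.PosSemidef) (hB : B.PosSemidef)
    (hAB : (B - A).PosSemidef) {t : ℝ} (ht : 0 < t) :
    (hA.1.cfc (fun x => (x + t)⁻¹) - hB.1.cfc (fun x => (x + t)⁻¹)).PosSemidef := by
  have hAe : ∀ i, 0 ≤ hA.1.eigenvalues i := hA.eigenvalues_nonneg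
  have hBe : ∀ i, 0 ≤ hB.1.eigenvalues i := hB.eigenvalues_nonneg
  set r : ℝ → ℝ := fun x => (Real.sqrt (x + t))⁻¹ with hr
  set s : ℝ → ℝ := fun x => Real.sqrt (x + t) with hs
  set R : Matrix n n ℂ := hA.1.cfc r with hR
  set S : Matrix n n ℂ := hA.1.cfc s with hS
  have hRherm : R.IsHermitian := cfc_hermitian _ _
  have hApos : ∀ i, 0 < hA.1.eigenvalues i + t := fun i => by linarith [hAe i]
  have hBpos : ∀ i, 0 < hB.1.eigenvalues i + t := fun i => by linarith [hBe i]
  have hsqrt_pos : ∀ i, 0 < Real.sqrt (hA.1.eigenvalues i + t) :=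
    fun i => Real.sqrt_pos.mpr (hApos i)
  have hSR : S * R = 1 := by
    rw [hS, hR, cfc_mul_cfc,
      cfc_congr_eig hA.1 (g := fun _ => 1) (fun i => mul_inv_cancel₀ (ne_of_gt (hsqrt_pos i)))]
    exact cfc_one _
  have hRS : R * S = 1 := by
    rw [hS, hR, cfc_mul_cfc,
      cfc_congr_eig hA.1 (g := fun _ => 1) (fun i => inv_mul_cancel₀ (ne_of_gt (hsqrt_pos i)))]
    exact cfc_one _
  set A' : Matrix n n ℂ := A + (t : ℂ) • 1 with hA'
  set B' : Matrix n n ℂ := B + (t : ℂ) • 1 with hB'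
  have hA'cfc : A' = hA.1.cfc (fun x => x + t) := by
    have h1 := cfc_add hA.1 (fun x => x) (fun _ => t)
    rw [cfc_id', cfc_const] at h1
    rw [hA']; exact h1
  have hB'cfc : B' = hB.1.cfc (fun x => x + t) := by
    have h1 := cfc_add hB.1 (fun x => x) (fun _ => t)
    rw [cfc_id', cfc_const] at h1
    rw [hB']; exact h1
  have hrr : ∀ i, r (hA.1.eigenvalues i) * r (hA.1.eigenvalues i)
      = (hA.1.eigenvalues i + t)⁻¹ := fun i => by
    rw [hr]
    rw [← mul_inv]
    rw [Real.mul_self_sqrt (le_of_lt (hApos i))]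
  have hRAR : R * A' * R = 1 := by
    rw [hA'cfc, hR, cfc_mul_cfc, cfc_mul_cfc,
      cfc_congr_eig hA.1 (g := fun _ => 1) (fun i => by
        have h2 : r (hA.1.eigenvalues i) * (hA.1.eigenvalues i + t) * r (hA.1.eigenvalues i)
            = (hA.1.eigenvalues i + t) * (r (hA.1.eigenvalues i) * r (hA.1.eigenvalues i)) := by
          ring
        rw [h2, hrr i, mul_inv_cancel₀ (ne_of_gt (hApos i))])]
    exact cfc_one _
  set M : Matrix n n ℂ := R * B' * R with hM
  have hB'herm : B'.IsHermitian := by rw [hB'cfc]; exact cfc_hermitian _ _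
  have hMherm : M.IsHermitian := by
    have h1 := isHermitian_mul_mul_conjTranspose R hB'herm
    rwa [hRherm.eq] at h1
  have hM1 : (M - 1).PosSemidef := by
    have hdiff : M - 1 = R * (B - A) * R := by
      rw [hM, ← hRAR]
      have h1 : B' - A' = B - A := by rw [hA', hB']; abel
      rw [← h1, Matrix.mul_sub, Matrix.sub_mul]
    rw [hdiff]
    have h2 := hAB.mul_mul_conjTranspose_same R
    rwa [hRherm.eq] at h2
  have hMeig : ∀ j, 1 ≤ hMherm.eigenvalues j := one_le_eigenvalues_of_psd hMherm hM1
  have hMeigpos : ∀ j, (0:ℝ) < hMherm.eigenvalues j := fun j => lt_of_lt_of_le one_pos (hMeig j)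
  set N : Matrix n n ℂ := hMherm.cfc (fun x => x⁻¹) with hN
  have hMN : M * N = 1 := by
    conv_lhs => rw [← cfc_id' hMherm]
    rw [hN, cfc_mul_cfc,
      cfc_congr_eig hMherm (g := fun _ => 1)
        (fun j => mul_inv_cancel₀ (ne_of_gt (hMeigpos j)))]
    exact cfc_one _
  have hN1 : (1 - N).PosSemidef := by
    have h1 : (1 : Matrix n n ℂ) - N = hMherm.cfc (fun x => 1 - x⁻¹) := by
      rw [hN, ← cfc_one hMherm, cfc_sub]
    rw [h1]
    exact cfc_posSemidef hMherm (fun j => by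
      have h2 := hMeig j
      have h3 : (hMherm.eigenvalues j)⁻¹ ≤ 1 := by
        rw [inv_le_one_iff₀]; right; exact h2
      linarith)
  have hSMS : S * M * S = B' := by
    calc S * M * S = (S * R) * (B' * (R * S)) := by rw [hM]; simp only [mul_assoc]
      _ = B' := by rw [hSR, hRS, one_mul, mul_one]
  have hB'RNR : B' * (R * (N * R)) = 1 := by
    calc B' * (R * (N * R)) = (S * M) * ((S * R) * (N * R)) := by
          rw [← hSMS]; simp only [mul_assoc]
      _ = S * (M * N) * R := by rw [hSR, one_mul]; simp only [mul_assoc]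
      _ = 1 := by rw [hMN, mul_one, hSR]
  have hXB' : hB.1.cfc (fun x => (x + t)⁻¹) * B' = 1 := by
    rw [hB'cfc, cfc_mul_cfc,
      cfc_congr_eig hB.1 (g := fun _ => 1)
        (fun i => inv_mul_cancel₀ (ne_of_gt (hBpos i)))]
    exact cfc_one _
  have hXeq : hB.1.cfc (fun x => (x + t)⁻¹) = R * (N * R) := by
    calc hB.1.cfc (fun x => (x + t)⁻¹)
        = hB.1.cfc (fun x => (x + t)⁻¹) * (B' * (R * (N * R))) := by rw [hB'RNR, mul_one]
      _ = (hB.1.cfc (fun x => (x + t)⁻¹) * B') * (R * (N * R)) := by simp only [mul_assoc]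
      _ = R * (N * R) := by rw [hXB', one_mul]
  have hRR : hA.1.cfc (fun x => (x + t)⁻¹) = R * R := by
    rw [hR, cfc_mul_cfc]
    exact (cfc_congr_eig hA.1 (fun i => hrr i)).symm
  have hfinal : hA.1.cfc (fun x => (x + t)⁻¹) - hB.1.cfc (fun x => (x + t)⁻¹)
      = R * (1 - N) * R := by
    rw [hRR, hXeq, Matrix.mul_sub, Matrix.sub_mul, mul_one]
    simp only [mul_assoc]
  rw [hfinal]
  have h2 := hN1.mul_mul_conjTranspose_same R
  rwa [hRherm.eq] at h2


lemma key_real {ι κ : Type*} [Fintype ι] [Fintype κ] (lam : ι → ℝ) (mu : κ → ℝ)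
    (r : ι → ℝ) (s : κ → ℝ)
    (hlam : ∀ i, 0 ≤ lam i) (hmu : ∀ j, 0 ≤ mu j)
    (hlam0 : ∀ i, lam i = 0 → r i = 0) (hmu0 : ∀ j, mu j = 0 → s j = 0)
    (hsum : ∑ i, r i = ∑ j, s j)
    (hkey : ∀ t : ℝ, 0 < t → ∑ j, s j * (mu j + t)⁻¹ ≤ ∑ i, r i * (lam i + t)⁻¹) :
    ∑ i, r i * Real.log (lam i) ≤ ∑ j, s j * Real.log (mu j) := by
  set G : ℝ → ℝ := fun T => (∑ j, s j * Real.log (mu j + T)) - ∑ i, r i * Real.log (lam i + T)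
    with hG
  -- continuity on [0, ∞)
  have contTerm : ∀ (a c : ℝ), 0 ≤ a → (a = 0 → c = 0) →
      ContinuousOn (fun T => c * Real.log (a + T)) (Set.Ici 0) := by
    intro a c ha hac
    by_cases hc : c = 0
    · have : (fun T : ℝ => c * Real.log (a + T)) = fun _ => 0 := by
        funext T; rw [hc, zero_mul]
      rw [this]; exact continuousOn_const
    · have ha' : 0 < a := lt_of_le_of_ne ha (fun h => hc (hac h.symm))
      apply ContinuousOn.mul continuousOn_const
      intro T hT
      apply ContinuousAt.continuousWithinAt
      exact (Real.continuousAt_log (by simp at hT; positivity)).comp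
        (continuousAt_const.add continuousAt_id)
  have hGcont : ContinuousOn G (Set.Ici 0) := by
    apply ContinuousOn.sub
    · exact continuousOn_finset_sum _ (fun j _ => contTerm (mu j) (s j) (hmu j) (hmu0 j))
    · exact continuousOn_finset_sum _ (fun i _ => contTerm (lam i) (r i) (hlam i) (hlam0 i))
  -- derivative on (0, ∞)
  have derivTerm : ∀ (a c T : ℝ), 0 ≤ a → 0 < T →
      HasDerivAt (fun T => c * Real.log (a + T)) (c * (a + T)⁻¹) T := by
    intro a c T ha hT
    have h1 : HasDerivAt (fun T : ℝ => a + T) 1 T := by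
      simpa using (hasDerivAt_id T).const_add a
    have h2 : HasDerivAt (fun T : ℝ => Real.log (a + T)) ((a + T)⁻¹ * 1) T :=
      (Real.hasDerivAt_log (by positivity)).comp T h1
    simpa using h2.const_mul c
  have hGderiv : ∀ T : ℝ, 0 < T →
      HasDerivAt G ((∑ j, s j * (mu j + T)⁻¹) - ∑ i, r i * (lam i + T)⁻¹) T := by
    intro T hT
    apply HasDerivAt.sub
    · exact HasDerivAt.fun_sum (fun j _ => derivTerm (mu j) (s j) T (hmu j) hT)
    · exact HasDerivAt.fun_sum (fun i _ => derivTerm (lam i) (r i) T (hlam i) hT)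
  -- G is antitone on [0, ∞)
  have hGanti : AntitoneOn G (Set.Ici 0) := by
    apply antitoneOn_of_deriv_nonpos (convex_Ici 0) hGcont
    · intro T hT
      rw [interior_Ici] at hT
      exact (hGderiv T hT).differentiableAt.differentiableWithinAt
    · intro T hT
      rw [interior_Ici] at hT
      rw [(hGderiv T hT).deriv]
      have := hkey T hT
      linarith
  -- G tends to 0 at infinity
  have hGlim : Filter.Tendsto G Filter.atTop (nhds 0) := by
    have hGalt : ∀ T : ℝ, 0 < T →
        G T = (∑ j, s j * Real.log (1 + mu j / T)) - ∑ i, r i * Real.log (1 + lam i / T) := by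
      intro T hT
      have hterm : ∀ (a c : ℝ), 0 ≤ a → (a = 0 → c = 0) →
          c * Real.log (a + T) = c * Real.log (1 + a / T) + c * Real.log T := by
        intro a c ha hac
        by_cases hc : c = 0
        · simp [hc]
        · have ha' : 0 < a := lt_of_le_of_ne ha (fun h => hc (hac h.symm))
          have h1 : a + T = (1 + a / T) * T := by field_simp; ring
          rw [h1, Real.log_mul (by positivity) (ne_of_gt hT), mul_add]
      rw [hG]
      simp only
      rw [Finset.sum_congr rfl (fun j _ => hterm (mu j) (s j) (hmu j) (hmu0 j)),
        Finset.sum_congr rfl (fun i _ => hterm (lam i) (r i) (hlam i) (hlam0 i)),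
        Finset.sum_add_distrib, Finset.sum_add_distrib, ← Finset.sum_mul, ← Finset.sum_mul,
        hsum]
      ring
    have hlim1 : ∀ a : ℝ, Filter.Tendsto (fun T : ℝ => Real.log (1 + a / T))
        Filter.atTop (nhds 0) := by
      intro a
      have h1 : Filter.Tendsto (fun T : ℝ => 1 + a / T) Filter.atTop (nhds 1) := by
        have h0 : Filter.Tendsto (fun T : ℝ => a / T) Filter.atTop (nhds 0) := by
          simpa [div_eq_mul_inv] using tendsto_inv_atTop_zero.const_mul a
        simpa using (tendsto_const_nhds (x := (1:ℝ))).add h0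
      have h2 := (Real.continuousAt_log (by norm_num : (1:ℝ) ≠ 0)).tendsto.comp h1
      simpa [Function.comp_def] using h2
    have hlim2 : Filter.Tendsto
        (fun T : ℝ => (∑ j, s j * Real.log (1 + mu j / T)) - ∑ i, r i * Real.log (1 + lam i / T))
        Filter.atTop (nhds 0) := by
      have hA := tendsto_finset_sum (Finset.univ (α := κ))
        (fun j _ => ((hlim1 (mu j)).const_mul (s j)))
      have hB := tendsto_finset_sum (Finset.univ (α := ι))
        (fun i _ => ((hlim1 (lam i)).const_mul (r i)))
      simpa using hA.sub hB
    apply hlim2.congr'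
    filter_upwards [Filter.eventually_gt_atTop 0] with T hT
    exact (hGalt T hT).symm
  -- conclude
  have hfin : (0:ℝ) ≤ G 0 := by
    apply le_of_tendsto hGlim
    filter_upwards [Filter.eventually_ge_atTop 0] with T hT
    exact hGanti (Set.self_mem_Ici) hT hT
  rw [hG] at hfin
  simp only [add_zero] at hfin
  linarith


lemma posSemidef_sum {ι : Type*} [Fintype ι] (f : ι → Matrix n n ℂ)
    (h : ∀ i, (f i).PosSemidef) : (∑ i, f i).PosSemidef :=
  Finset.sum_induction f _ (fun _ _ ha hb => ha.add hb) Matrix.PosSemidef.zero (fun i _ => h i)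

lemma posSemidef_kron {m : Type*} [Fintype m] [DecidableEq m]
    {P : Matrix n n ℂ} {Q : Matrix m m ℂ} (hP : P.PosSemidef) (hQ : Q.PosSemidef) :
    (P ⊗ₖ Q).PosSemidef := by
  exact hP.kronecker hQ

lemma trace_eq_sum_eigs {Q : Matrix n n ℂ} (hQ : Q.IsHermitian) :
    Q.trace = ((∑ i, hQ.eigenvalues i : ℝ) : ℂ) := by
  conv_lhs => rw [hQ.spectral_theorem]
  simp only [Unitary.conjStarAlgAut_apply]
  rw [Matrix.trace_mul_cycle, Unitary.star_mul_self_of_mem (SetLike.coe_mem _), one_mul,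
    Matrix.trace_diagonal]
  push_cast
  rfl

lemma trace_smul_one_sub_psd {Q : Matrix n n ℂ} (hQ : Q.PosSemidef) :
    (Q.trace • (1 : Matrix n n ℂ) - Q).PosSemidef := by
  set τ : ℝ := ∑ i, hQ.1.eigenvalues i with hτ
  have h1 := cfc_sub hQ.1 (fun _ => τ) (fun x => x)
  rw [cfc_const, cfc_id'] at h1
  rw [trace_eq_sum_eigs hQ.1, ← hτ, h1]
  exact cfc_posSemidef hQ.1 (fun i => sub_nonneg.mpr
    (Finset.single_le_sum (fun j _ => hQ.eigenvalues_nonneg j) (Finset.mem_univ i)))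

lemma reduction_identity {k : ℕ} (P Q : Fin k → Matrix n n ℂ) :
    ptraceB (∑ i, P i ⊗ₖ Q i) ⊗ₖ (1 : Matrix n n ℂ) - (∑ i, P i ⊗ₖ Q i)
      = ∑ i, P i ⊗ₖ ((Q i).trace • (1 : Matrix n n ℂ) - Q i) := by
  ext ⟨a, b⟩ ⟨a', b'⟩
  simp only [ptraceB, Matrix.sub_apply, Matrix.sum_apply, kroneckerMap_apply, Matrix.of_apply,
    Matrix.smul_apply, Matrix.one_apply, Matrix.trace, Matrix.diag, smul_eq_mul]
  by_cases hbb : b = b'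
  · subst hbb
    simp only [if_pos rfl, if_true, mul_one]
    rw [Finset.sum_comm, ← Finset.sum_sub_distrib]
    exact Finset.sum_congr rfl fun i _ => by rw [mul_sub, Finset.mul_sum]
  · simp only [if_neg hbb, mul_zero, zero_sub, mul_sub]
    rw [← Finset.sum_neg_distrib]
    exact Finset.sum_congr rfl fun i _ => (mul_neg _ _).symm

end Helpers

/-- for separable `Y_{AB}`, one has `Y_A ⊗ I − Y_{AB} ≥ 0`, and consequently
`log(Y_A ⊗ I) ≥ log Y_{AB}` on the support of `Y_{AB}`. -/
theorem separable_reduction_criterion {d : ℕ}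
    (Y : Matrix (Fin d × Fin d) (Fin d × Fin d) ℂ) (hY : IsSepOp Y) :
    (ptraceB Y ⊗ₖ (1 : Matrix (Fin d) (Fin d) ℂ) - Y).PosSemidef ∧
      ∀ v : Fin d × Fin d → ℂ, v ∈ LinearMap.range Y.mulVecLin →
        0 ≤ (star v ⬝ᵥ
          ((matLog (ptraceB Y ⊗ₖ (1 : Matrix (Fin d) (Fin d) ℂ)) - matLog Y).mulVec v)).re := by
  obtain ⟨k, P, Q, hP, hQ, hYeq⟩ := hY
  have hYpsd : Y.PosSemidef := by
    rw [hYeq]; exact posSemidef_sum _ (fun i => posSemidef_kron (hP i) (hQ i))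
  have hpart1 : (ptraceB Y ⊗ₖ (1 : Matrix (Fin d) (Fin d) ℂ) - Y).PosSemidef := by
    rw [hYeq, reduction_identity]
    exact posSemidef_sum _ (fun i => posSemidef_kron (hP i) (trace_smul_one_sub_psd (hQ i)))
  refine ⟨hpart1, fun v hv => ?_⟩
  obtain ⟨w, hw⟩ := hv
  rw [Matrix.mulVecLin_apply] at hw
  have hBpsd : (ptraceB Y ⊗ₖ (1 : Matrix (Fin d) (Fin d) ℂ)).PosSemidef := by
    have h1 := hpart1.add hYpsd
    rwa [sub_add_cancel] at h1
  unfold matLog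
  rw [dif_pos hBpsd.1, dif_pos hYpsd.1]
  rw [show (hBpsd.1.cfc Real.log - hYpsd.1.cfc Real.log).mulVec v
    = (hBpsd.1.cfc Real.log - hYpsd.1.cfc Real.log) *ᵥ v from rfl]
  rw [sub_mulVec, dotProduct_sub, Complex.sub_re,
    quad_re hBpsd.1 Real.log v, quad_re hYpsd.1 Real.log v]
  set nr : (Fin d × Fin d) → ℝ := fun i =>
    Complex.normSq ((star (hYpsd.1.eigenvectorUnitary : Matrix _ _ ℂ) *ᵥ v) i) with hnr
  set ns : (Fin d × Fin d) → ℝ := fun j =>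
    Complex.normSq ((star (hBpsd.1.eigenvectorUnitary : Matrix _ _ ℂ) *ᵥ v) j) with hns
  have hmain : ∑ i, nr i * Real.log (hYpsd.1.eigenvalues i)
      ≤ ∑ j, ns j * Real.log (hBpsd.1.eigenvalues j) := by
    apply key_real (hlam := hYpsd.eigenvalues_nonneg) (hmu := hBpsd.eigenvalues_nonneg)
    · intro i h0
      rw [hnr]
      simp only
      rw [← hw, coeff_vanish_range hYpsd.1 w i h0, Complex.normSq_zero]
    · intro j h0
      rw [hns]
      simp only
      rw [← hw, coeff_vanish_dominated hYpsd hBpsd.1 hpart1 w j h0, Complex.normSq_zero]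
    · rw [hnr, hns]
      simp only
      rw [sum_normSq_eq hYpsd.1 v, sum_normSq_eq hBpsd.1 v]
    · intro t ht
      have h1 := (inv_shift_psd hYpsd hBpsd hpart1 ht).re_dotProduct_nonneg v
      rw [show RCLike.re (star v ⬝ᵥ
          (hYpsd.1.cfc (fun x => (x + t)⁻¹) - hBpsd.1.cfc (fun x => (x + t)⁻¹)) *ᵥ v)
        = (star v ⬝ᵥ
          (hYpsd.1.cfc (fun x => (x + t)⁻¹) - hBpsd.1.cfc (fun x => (x + t)⁻¹)) *ᵥ v).re
        from rfl] at h1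
      rw [sub_mulVec, dotProduct_sub, Complex.sub_re,
        quad_re hYpsd.1 (fun x => (x + t)⁻¹) v, quad_re hBpsd.1 (fun x => (x + t)⁻¹) v] at h1
      have e1 : ∑ j, ns j * (hBpsd.1.eigenvalues j + t)⁻¹
          = ∑ j, (hBpsd.1.eigenvalues j + t)⁻¹ * ns j :=
        Finset.sum_congr rfl fun j _ => mul_comm _ _
      have e2 : ∑ i, nr i * (hYpsd.1.eigenvalues i + t)⁻¹
          = ∑ i, (hYpsd.1.eigenvalues i + t)⁻¹ * nr i :=
        Finset.sum_congr rfl fun i _ => mul_comm _ _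
      rw [e1, e2]
      linarith
  have e3 : ∑ j, Real.log (hBpsd.1.eigenvalues j) * ns j
      = ∑ j, ns j * Real.log (hBpsd.1.eigenvalues j) :=
    Finset.sum_congr rfl fun j _ => mul_comm _ _
  have e4 : ∑ i, Real.log (hYpsd.1.eigenvalues i) * nr i
      = ∑ i, nr i * Real.log (hYpsd.1.eigenvalues i) :=
    Finset.sum_congr rfl fun i _ => mul_comm _ _
  rw [e3, e4]
  linarith


end QMeas
end
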